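/- Perturbation stability implies the projection-averaging inequality: let C_1, C_2 be closed convex sets and suppose there exists M > 0 such that for the parametric problem min{(1/2)‖x-p‖² + (1/2)‖y-q‖² : p - q = r, p ∈ C_1, q ∈ C_2} with optimal solution (p(r), q(r)), one has ‖(p(0),q(0)) - (p(r),q(r))‖ ≤ M‖r‖ for all feasible r. Then ‖proj_{C_1}(x) + proj_{C_2}(y) - 2 proj_{C_1∩C_2}((x+y)/2)‖ ≤ √2 M ‖proj_{C_1}(x) - proj_{C_2}(y)‖ for all x, y. -/
import Mathlib


open RealInnerProductSpace

/-- `(p, q)` is an optimal solution of the parametric problem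
`min {(1/2)‖x-p‖² + (1/2)‖y-q‖² : p - q = r, p ∈ C₁, q ∈ C₂}`. -/
def IsOptPair {n : ℕ} (C1 C2 : Set (EuclideanSpace ℝ (Fin n)))
    (x y r p q : EuclideanSpace ℝ (Fin n)) : Prop :=
  p - q = r ∧ p ∈ C1 ∧ q ∈ C2 ∧
    ∀ p' q', p' - q' = r → p' ∈ C1 → q' ∈ C2 →
      (1 / 2 : ℝ) * ‖x - p‖ ^ 2 + (1 / 2 : ℝ) * ‖y - q‖ ^ 2
        ≤ (1 / 2 : ℝ) * ‖x - p'‖ ^ 2 + (1 / 2 : ℝ) * ‖y - q'‖ ^ 2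

/-- Perturbation stability of the parametric projection problem implies the
projection-averaging inequality
`‖proj_{C₁}(x) + proj_{C₂}(y) - 2 proj_{C₁∩C₂}((x+y)/2)‖ ≤ √2 M ‖proj_{C₁}(x) - proj_{C₂}(y)‖`. -/
theorem stmt_13 {n : ℕ} (C1 C2 : Set (EuclideanSpace ℝ (Fin n)))
    (hcl1 : IsClosed C1) (hcl2 : IsClosed C2) (hcv1 : Convex ℝ C1) (hcv2 : Convex ℝ C2)
    (hne : (C1 ∩ C2).Nonempty)
    (proj1 proj2 proj12 : EuclideanSpace ℝ (Fin n) → EuclideanSpace ℝ (Fin n))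
    (hproj1 : ∀ u, proj1 u ∈ C1 ∧ ∀ w ∈ C1, ‖u - proj1 u‖ ≤ ‖u - w‖)
    (hproj2 : ∀ u, proj2 u ∈ C2 ∧ ∀ w ∈ C2, ‖u - proj2 u‖ ≤ ‖u - w‖)
    (hproj12 : ∀ u, proj12 u ∈ C1 ∩ C2 ∧ ∀ w ∈ C1 ∩ C2, ‖u - proj12 u‖ ≤ ‖u - w‖)
    (M : ℝ) (hM : 0 < M) (x y : EuclideanSpace ℝ (Fin n))
    (hstab : ∀ r p q p0 q0 : EuclideanSpace ℝ (Fin n),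
      IsOptPair C1 C2 x y r p q → IsOptPair C1 C2 x y 0 p0 q0 →
        Real.sqrt (‖p0 - p‖ ^ 2 + ‖q0 - q‖ ^ 2) ≤ M * ‖r‖) :
    ‖proj1 x + proj2 y - (2 : ℝ) • proj12 ((1 / 2 : ℝ) • (x + y))‖
      ≤ Real.sqrt 2 * M * ‖proj1 x - proj2 y‖ := by
  set p := proj1 x with hp
  set q := proj2 y with hq
  set m := (1 / 2 : ℝ) • (x + y) with hm
  set z := proj12 m with hz
  obtain ⟨hpC, hpmin⟩ := hproj1 x
  obtain ⟨hqC, hqmin⟩ := hproj2 y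
  obtain ⟨hzC, hzmin⟩ := hproj12 m
  have hopt1 : IsOptPair C1 C2 x y (p - q) p q := by
    refine ⟨rfl, hpC, hqC, fun p' q' _ hp' hq' => ?_⟩
    have h1 : ‖x - p‖ ^ 2 ≤ ‖x - p'‖ ^ 2 :=
      pow_le_pow_left₀ (norm_nonneg _) (hpmin p' hp') 2
    have h2 : ‖y - q‖ ^ 2 ≤ ‖y - q'‖ ^ 2 :=
      pow_le_pow_left₀ (norm_nonneg _) (hqmin q' hq') 2
    linarith
  have key : ∀ w : EuclideanSpace ℝ (Fin n),
      ‖x - w‖ ^ 2 + ‖y - w‖ ^ 2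
        = 2 * ‖m - w‖ ^ 2 + (‖x‖ ^ 2 + ‖y‖ ^ 2 - 2 * ‖m‖ ^ 2) := by
    intro w
    have e1 : ‖x - w‖ ^ 2 = ‖x‖ ^ 2 - 2 * ⟪x, w⟫ + ‖w‖ ^ 2 := by
      rw [norm_sub_sq_real]
    have e2 : ‖y - w‖ ^ 2 = ‖y‖ ^ 2 - 2 * ⟪y, w⟫ + ‖w‖ ^ 2 := by
      rw [norm_sub_sq_real]
    have e3 : ‖m - w‖ ^ 2 = ‖m‖ ^ 2 - 2 * ⟪m, w⟫ + ‖w‖ ^ 2 := by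
      rw [norm_sub_sq_real]
    have e4 : ⟪m, w⟫ = (1 / 2 : ℝ) * (⟪x, w⟫ + ⟪y, w⟫) := by
      rw [hm, real_inner_smul_left, inner_add_left]
    rw [e1, e2, e3, e4]; ring
  have hopt0 : IsOptPair C1 C2 x y 0 z z := by
    refine ⟨sub_self z, hzC.1, hzC.2, fun p' q' hr hp' hq' => ?_⟩
    have hpq : p' = q' := by
      have := sub_eq_zero.mp hr; exact this
    subst hpq
    have hmem : p' ∈ C1 ∩ C2 := ⟨hp', hq'⟩
    have h1 : ‖m - z‖ ^ 2 ≤ ‖m - p'‖ ^ 2 :=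
      pow_le_pow_left₀ (norm_nonneg _) (hzmin p' hmem) 2
    have k1 := key z
    have k2 := key p'
    linarith
  have hs := hstab (p - q) p q z z hopt1 hopt0
  have ha : ‖p + q - (2 : ℝ) • z‖ ≤ ‖z - p‖ + ‖z - q‖ := by
    have : p + q - (2 : ℝ) • z = -((z - p) + (z - q)) := by
      rw [two_smul]; abel
    rw [this, norm_neg]
    exact norm_add_le _ _
  have hb : ‖z - p‖ + ‖z - q‖
      ≤ Real.sqrt 2 * Real.sqrt (‖z - p‖ ^ 2 + ‖z - q‖ ^ 2) := by
    rw [← Real.sqrt_mul (by norm_num : (2:ℝ) ≥ 0)]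
    have h1 : (‖z - p‖ + ‖z - q‖) ^ 2 ≤ 2 * (‖z - p‖ ^ 2 + ‖z - q‖ ^ 2) := by
      nlinarith [sq_nonneg (‖z - p‖ - ‖z - q‖)]
    calc ‖z - p‖ + ‖z - q‖ = Real.sqrt ((‖z - p‖ + ‖z - q‖) ^ 2) := by
          rw [Real.sqrt_sq (by positivity)]
      _ ≤ _ := Real.sqrt_le_sqrt h1
  calc ‖p + q - (2 : ℝ) • z‖ ≤ ‖z - p‖ + ‖z - q‖ := ha
    _ ≤ Real.sqrt 2 * Real.sqrt (‖z - p‖ ^ 2 + ‖z - q‖ ^ 2) := hb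
    _ ≤ Real.sqrt 2 * (M * ‖p - q‖) := by
        apply mul_le_mul_of_nonneg_left hs (Real.sqrt_nonneg 2)
    _ = Real.sqrt 2 * M * ‖p - q‖ := by ring
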